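/- Suppose there exist functions φ_L, φ_U : 𝒳 × 𝒴 → ℝ such that φ_L(x,y) ≤ P(X=x | Y=y, S=s) / P(X=x | S=s) ≤ φ_U(x,y) for all x ∈ 𝒳, y ∈ 𝒴, s ∈ 𝒮, and set Δ(x,y) = φ_U(x,y) − φ_L(x,y). Fix s_max ∈ 𝒮 and define the conditional distribution Q̃(ŷ | x, s) := P(Y=ŷ | X=x, S=s_max), and let Q̃_{Ŷ|S=s}(ŷ) = ∑_x P(X=x | S=s) Q̃(ŷ | x, s) be the induced conditional distribution of Ŷ given S=s. Then: E_{s∼P_S}[ TV(Q̃_{Ŷ|S=s}, P_{Y|S=s_max}) ] ≤ E_{x∼P_X, y∼P_{Y|S=s_max}}[ Δ(x, y) ], where the expectation on the right is under the product of the marginal of X and the conditional of Y given S=s_max. -/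

import Mathlib

open Finset

noncomputable section

variable {𝒳 𝒴 𝒮 : Type*} [Fintype 𝒳] [Fintype 𝒴] [Fintype 𝒮]

/-- Total variation distance between two finitely supported distributions on `𝒴`,
`TV(p, q) = (1/2) ∑ y, |p y - q y|`. -/
def TV (p q : 𝒴 → ℝ) : ℝ := (1 / 2) * ∑ y, |p y - q y|

/-- Marginal distribution of `(X, S)` under the joint `P` of `(X, Y, S)`. -/
def margXS (P : 𝒳 → 𝒴 → 𝒮 → ℝ) (x : 𝒳) (s : 𝒮) : ℝ := ∑ y, P x y s

/-- Marginal distribution of `(Y, S)`. -/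
def margYS (P : 𝒳 → 𝒴 → 𝒮 → ℝ) (y : 𝒴) (s : 𝒮) : ℝ := ∑ x, P x y s

/-- Marginal distribution of `S`. -/
def margS (P : 𝒳 → 𝒴 → 𝒮 → ℝ) (s : 𝒮) : ℝ := ∑ x, margXS P x s

/-- Marginal distribution of `X`. -/
def margX (P : 𝒳 → 𝒴 → 𝒮 → ℝ) (x : 𝒳) : ℝ := ∑ s, margXS P x s

/-- Conditional distribution of `Y` given `X = x, S = s`. -/
def condYXS (P : 𝒳 → 𝒴 → 𝒮 → ℝ) (x : 𝒳) (s : 𝒮) (y : 𝒴) : ℝ := P x y s / margXS P x s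

/-- Conditional distribution of `Y` given `S = s`. -/
def condYS (P : 𝒳 → 𝒴 → 𝒮 → ℝ) (s : 𝒮) (y : 𝒴) : ℝ := margYS P y s / margS P s

/-- The ratio `P(X=x | Y=y, S=s) / P(X=x | S=s)`. -/
def condRatio (P : 𝒳 → 𝒴 → 𝒮 → ℝ) (x : 𝒳) (y : 𝒴) (s : 𝒮) : ℝ :=
  (P x y s / margYS P y s) / (margXS P x s / margS P s)

/-- A conditional distribution `Q`: for every `(x, s)`, `Q x s` is a probability
distribution on labels. -/
def IsRule (Q : 𝒳 → 𝒮 → 𝒴 → ℝ) : Prop :=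
  (∀ x s y, 0 ≤ Q x s y) ∧ ∀ x s, ∑ y, Q x s y = 1

/-- The generalized objective: `E_{(x,s)∼P_{X,S}}[TV(Q_{Ŷ|X=x,S=s}, P_{Y|X=x,S=s})]`. -/
def objective (P : 𝒳 → 𝒴 → 𝒮 → ℝ) (Q : 𝒳 → 𝒮 → 𝒴 → ℝ) : ℝ :=
  ∑ x, ∑ s, margXS P x s * TV (Q x s) (condYXS P x s)

/-- Joint distribution of `(Ŷ, S)` induced by `Q · P_{X,S}`. -/
def jointYhatS (P : 𝒳 → 𝒴 → 𝒮 → ℝ) (Q : 𝒳 → 𝒮 → 𝒴 → ℝ) (yh : 𝒴) (s : 𝒮) : ℝ :=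
  ∑ x, margXS P x s * Q x s yh

/-- Marginal distribution of the prediction `Ŷ`. -/
def margYhat (P : 𝒳 → 𝒴 → 𝒮 → ℝ) (Q : 𝒳 → 𝒮 → 𝒴 → ℝ) (yh : 𝒴) : ℝ :=
  ∑ s, jointYhatS P Q yh s

/-- Conditional distribution of the prediction `Ŷ` given `S = s`. -/
def condYhatS (P : 𝒳 → 𝒴 → 𝒮 → ℝ) (Q : 𝒳 → 𝒮 → 𝒴 → ℝ) (s : 𝒮) (yh : 𝒴) : ℝ :=
  jointYhatS P Q yh s / margS P s

/-- The conditional distribution `Q̃(ŷ | x, s) := P(Y=ŷ | X=x, S=s_max)`. -/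
def Qtilde (P : 𝒳 → 𝒴 → 𝒮 → ℝ) (smax : 𝒮) (x : 𝒳) (s : 𝒮) (yh : 𝒴) : ℝ :=
  condYXS P x smax yh

/-- Conditional distribution of the prediction `Ŷ` given `S = s` induced by `Q̃`:
`Q̃_{Ŷ|S=s}(ŷ) = ∑_x P(X=x|S=s) Q̃(ŷ|x,s)`. -/
def QtildeCondS (P : 𝒳 → 𝒴 → 𝒮 → ℝ) (smax : 𝒮) (s : 𝒮) (yh : 𝒴) : ℝ :=
  ∑ x, (margXS P x s / margS P s) * Qtilde P smax x s yh

/-! Writing `r(x, y, s) = P(x | y, s) / P(x | s)`, Bayes gives `P(y | x, s) = r(x, y, s) P(y | s)`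
and `E_{x | s}[r(x, y, s)] = 1`. Hence `P(s) (Q̃(y | s) - P(y | s_max))` is the `P_{X,S}(·, s)`-average
of `(r(x, y, s_max) - r(x, y, s)) P(y | s_max)`, and both ratios lie in `[φ_L(x, y), φ_U(x, y)]`.
Summing over `s` bounds the left side by half of the right side. -/

lemma abs_sum_mul_sub_le_sum_mul_sub {ι : Type*} (t : Finset ι) {w u v L U : ι → ℝ}
    (hw : ∀ i ∈ t, 0 ≤ w i) (hu : ∀ i ∈ t, u i ∈ Set.Icc (L i) (U i))
    (hv : ∀ i ∈ t, v i ∈ Set.Icc (L i) (U i)) :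
    |∑ i ∈ t, w i * (u i - v i)| ≤ ∑ i ∈ t, w i * (U i - L i) := by
  refine (abs_sum_le_sum_abs _ _).trans (sum_le_sum fun i hi => ?_)
  rw [abs_mul, abs_of_nonneg (hw i hi), ← Real.dist_eq]
  exact mul_le_mul_of_nonneg_left (Real.dist_le_of_mem_Icc (hu i hi) (hv i hi)) (hw i hi)

lemma mul_TV {p q : 𝒴 → ℝ} {c : ℝ} (hc : 0 ≤ c) :
    c * TV p q = 1 / 2 * ∑ y, |c * (p y - q y)| := by
  simp only [TV, abs_mul, abs_of_nonneg hc, ← mul_sum]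
  ring

section Bayes

variable {P : 𝒳 → 𝒴 → 𝒮 → ℝ} {x : 𝒳} {y : 𝒴} {s : 𝒮}

omit [Fintype 𝒮] in
lemma margXS_le_margS (hXS : ∀ x, 0 ≤ margXS P x s) : margXS P x s ≤ margS P s :=
  single_le_sum (fun x _ => hXS x) (mem_univ x)

omit [Fintype 𝒮] in
lemma condYS_nonneg (hXS : ∀ x, 0 ≤ margXS P x s) (hYS : 0 ≤ margYS P y s) :
    0 ≤ condYS P s y :=
  div_nonneg hYS (sum_nonneg fun x _ => hXS x)

omit [Fintype 𝒮] in
lemma condYXS_eq_condRatio_mul_condYS (hXS : margXS P x s ≠ 0) (hYS : margYS P y s ≠ 0)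
    (hS : margS P s ≠ 0) : condYXS P x s y = condRatio P x y s * condYS P s y := by
  unfold condYXS condRatio condYS
  field_simp

omit [Fintype 𝒮] in
lemma sum_margXS_mul_condRatio (hXS : ∀ x, margXS P x s ≠ 0) (hYS : margYS P y s ≠ 0) :
    ∑ x, margXS P x s * condRatio P x y s = margS P s := by
  have h : ∀ x, margXS P x s * condRatio P x y s = P x y s * (margS P s / margYS P y s) := by
    intro x
    unfold condRatio
    field_simp [hXS x]
  rw [sum_congr rfl fun x _ => h x, ← sum_mul]
  exact mul_div_cancel₀ _ hYS

end Bayes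

section Qtilde

variable {P : 𝒳 → 𝒴 → 𝒮 → ℝ}

omit [Fintype 𝒮] in
lemma margS_mul_QtildeCondS_sub_condYS (hXS : ∀ x s, 0 < margXS P x s)
    (hYS : ∀ y s, 0 < margYS P y s) (smax s : 𝒮) (y : 𝒴) :
    margS P s * (QtildeCondS P smax s y - condYS P smax y)
      = ∑ x, margXS P x s * condYS P smax y * (condRatio P x y smax - condRatio P x y s) := by
  have hS : ∀ x s, 0 < margS P s := fun x s =>
    (hXS x s).trans_le (margXS_le_margS fun x => (hXS x s).le)
  have hQ : ∀ x, margS P s * (margXS P x s / margS P s * Qtilde P smax x s y)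
      = margXS P x s * condRatio P x y smax * condYS P smax y := by
    intro x
    rw [Qtilde, condYXS_eq_condRatio_mul_condYS (hXS x smax).ne' (hYS y smax).ne'
      (hS x smax).ne', div_mul_eq_mul_div, mul_div_cancel₀ _ (hS x s).ne']
    ring
  rw [mul_sub, QtildeCondS, mul_sum, sum_congr rfl fun x _ => hQ x,
    ← sum_margXS_mul_condRatio (fun x => (hXS x s).ne') (hYS y s).ne', sum_mul, ← sum_sub_distrib]
  exact sum_congr rfl fun x _ => by ring

omit [Fintype 𝒮] in
lemma margS_mul_TV_QtildeCondS_le (hXS : ∀ x s, 0 < margXS P x s)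
    (hYS : ∀ y s, 0 < margYS P y s) (φL φU : 𝒳 → 𝒴 → ℝ)
    (hφ : ∀ x y s, condRatio P x y s ∈ Set.Icc (φL x y) (φU x y)) (smax s : 𝒮) :
    margS P s * TV (QtildeCondS P smax s) (condYS P smax)
      ≤ 1 / 2 * ∑ x, margXS P x s * ∑ y, condYS P smax y * (φU x y - φL x y) := by
  have hS : 0 ≤ margS P s := sum_nonneg fun x _ => (hXS x s).le
  rw [mul_TV hS]
  gcongr 1 / 2 * ?_
  calc ∑ y, |margS P s * (QtildeCondS P smax s y - condYS P smax y)|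
      ≤ ∑ y, ∑ x, margXS P x s * condYS P smax y * (φU x y - φL x y) := by
        refine sum_le_sum fun y _ => ?_
        have hc := condYS_nonneg (fun x => (hXS x smax).le) (hYS y smax).le
        rw [margS_mul_QtildeCondS_sub_condYS hXS hYS]
        exact abs_sum_mul_sub_le_sum_mul_sub _
          (fun x _ => mul_nonneg (hXS x s).le hc) (fun x _ => hφ x y smax) (fun x _ => hφ x y s)
    _ = ∑ x, margXS P x s * ∑ y, condYS P smax y * (φU x y - φL x y) := by
        rw [sum_comm]
        simp only [mul_sum, mul_assoc]

end Qtilde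

theorem qtilde_conditional_tv_bound_general
    (P : 𝒳 → 𝒴 → 𝒮 → ℝ)
    (hXS : ∀ x s, 0 < margXS P x s)
    (hYS : ∀ y s, 0 < margYS P y s)
    (φL φU : 𝒳 → 𝒴 → ℝ)
    (hL : ∀ x y s, φL x y ≤ condRatio P x y s)
    (hU : ∀ x y s, condRatio P x y s ≤ φU x y)
    (smax : 𝒮) :
    ∑ s, margS P s * TV (QtildeCondS P smax s) (condYS P smax)
      ≤ ∑ x, ∑ y, margX P x * condYS P smax y * (φU x y - φL x y) := by
  have hφ : ∀ x y s, condRatio P x y s ∈ Set.Icc (φL x y) (φU x y) := fun x y s =>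
    ⟨hL x y s, hU x y s⟩
  set g := fun x => ∑ y, condYS P smax y * (φU x y - φL x y)
  have hg : 0 ≤ ∑ x, margX P x * g x := sum_nonneg fun x _ => mul_nonneg
    (sum_nonneg fun s _ => (hXS x s).le)
    (sum_nonneg fun y _ => mul_nonneg
      (condYS_nonneg (fun x => (hXS x smax).le) (hYS y smax).le)
      (sub_nonneg.2 ((hL x y smax).trans (hU x y smax))))
  calc ∑ s, margS P s * TV (QtildeCondS P smax s) (condYS P smax)
      ≤ ∑ s, 1 / 2 * ∑ x, margXS P x s * g x :=
        sum_le_sum fun s _ => margS_mul_TV_QtildeCondS_le hXS hYS φL φU hφ smax s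
    _ = 1 / 2 * ∑ x, margX P x * g x := by
        rw [← mul_sum, sum_comm]
        simp only [margX, sum_mul]
    _ ≤ ∑ x, margX P x * g x := by linarith
    _ = ∑ x, ∑ y, margX P x * condYS P smax y * (φU x y - φL x y) := by
        simp only [g, mul_sum, mul_assoc]

/-- If `φ_L(x,y) ≤ P(x|y,s)/P(x|s) ≤ φ_U(x,y)` and `Δ = φ_U - φ_L`, then
`E_{s∼P_S}[TV(Q̃_{Ŷ|S=s}, P_{Y|S=s_max})] ≤ E_{x∼P_X, y∼P_{Y|S=s_max}}[Δ(x, y)]`. -/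
theorem qtilde_conditional_tv_bound
    (P : 𝒳 → 𝒴 → 𝒮 → ℝ)
    (hP0 : ∀ x y s, 0 ≤ P x y s)
    (hP1 : ∑ x, ∑ y, ∑ s, P x y s = 1)
    (hXS : ∀ x s, 0 < margXS P x s)
    (hYS : ∀ y s, 0 < margYS P y s)
    (φL φU : 𝒳 → 𝒴 → ℝ)
    (hL : ∀ x y s, φL x y ≤ condRatio P x y s)
    (hU : ∀ x y s, condRatio P x y s ≤ φU x y)
    (smax : 𝒮) :
    ∑ s, margS P s * TV (QtildeCondS P smax s) (condYS P smax)
      ≤ ∑ x, ∑ y, margX P x * condYS P smax y * (φU x y - φL x y) :=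
  qtilde_conditional_tv_bound_general P hXS hYS φL φU hL hU smax
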